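/- arXiv:2404.11888 — 2 statements merged into one kernel-verified Lean document; each statement's English description precedes it below -/
import Mathlib

section
/- Let E be a real Hilbert space, let F : E → ℝ be differentiable, L-smooth with L > 0, and μ-strongly convex with μ > 0, and let W_g* ∈ E be a global minimizer of F with F* = F(W_g*). Let (Ω, P) be a probability space, W, W* ∈ E, η ≥ 0, and let g, q : Ω → E be square-integrable random vectors with E[g] = ḡ and E[q] = ∇F(W̄), where W̄ := W − η ḡ. Assume E[‖q − ∇F(W̄)‖²] ≤ σ_g² and E[⟨ḡ − g, ∇F(W̄) − q⟩] = 0. Then for every γ ≥ 0: E[‖W − η g − γ q − W*‖²] ≤ E[‖W − η g − W*‖²] + γ² σ_g² + (2γ² − γ/L)‖∇F(W̄)‖² + (2/μ)(F(W*) − F*) + 2γ(F* − F(W̄)). -/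
/-!
Decompose `W - η g - γ q - W* = (W̄ - γ ∇F(W̄) - W*) + η (ḡ - g) + γ (∇F(W̄) - q)`. The two random
parts are centred and uncorrelated, so the second moment is the squared deterministic part plus
the two variances; the FedAvg iterate `W - η g - W*` splits in the same way without the `γ`-part.
What remains is a deterministic gradient step from `W̄`, bounded by the smoothness-sharpened
convexity inequality `F x - F* + ‖∇F x‖² / (2L) ≤ ⟪∇F x, x - W_g*⟫`, Young's inequality for
`⟪∇F W̄, W* - W_g*⟫` and strong convexity at the minimiser, `‖W* - W_g*‖² ≤ (2/μ) (F W* - F*)`.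
-/

open MeasureTheory
open scoped RealInnerProductSpace

theorem le_add_deriv_add_half_of_deriv_le {f f' : ℝ → ℝ} {K : ℝ}
    (hf : ∀ t, HasDerivAt f (f' t) t) (hf' : ∀ t ∈ Set.Ico (0 : ℝ) 1, f' t ≤ f' 0 + K * t) :
    f 1 ≤ f 0 + f' 0 + K / 2 := by
  have hB : ∀ t, HasDerivAt (fun t => f 0 + f' 0 * t + K / 2 * t ^ 2) (f' 0 + K * t) t := by
    intro t
    exact (((hasDerivAt_id' t).const_mul (f' 0)).const_add (f 0) |>.add
      ((hasDerivAt_pow 2 t).const_mul (K / 2))).congr_deriv (by norm_num; ring)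
  have := image_le_of_deriv_right_le_deriv_boundary
    (fun t _ => (hf t).continuousAt.continuousWithinAt) (fun t _ => (hf t).hasDerivWithinAt)
    (by simp) (fun t _ => (hB t).continuousAt.continuousWithinAt)
    (fun t _ => (hB t).hasDerivWithinAt) hf' (Set.right_mem_Icc.2 zero_le_one)
  simpa using this

section Smooth

variable {E : Type*} [NormedAddCommGroup E] [InnerProductSpace ℝ E] [CompleteSpace E] {F : E → ℝ}

theorem hasDerivAt_comp_add_smul {x v : E} {t : ℝ} (hF : DifferentiableAt ℝ F (x + t • v)) :
    HasDerivAt (fun s : ℝ => F (x + s • v)) ⟪gradient F (x + t • v), v⟫ t := by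
  rw [inner_gradient_left]
  exact hF.hasFDerivAt.comp_hasDerivAt t
    (((hasDerivAt_id t).smul_const v).const_add x |>.congr_deriv (one_smul ℝ v))

theorem le_add_inner_gradient_add_sq_of_lipschitz {L : ℝ} (hF : Differentiable ℝ F)
    (hsmooth : ∀ x y, ‖gradient F x - gradient F y‖ ≤ L * ‖x - y‖) (x y : E) :
    F y ≤ F x + ⟪gradient F x, y - x⟫ + L / 2 * ‖y - x‖ ^ 2 := by
  have hline := le_add_deriv_add_half_of_deriv_le (K := L * ‖y - x‖ ^ 2)
    (fun t => hasDerivAt_comp_add_smul (x := x) (v := y - x) (t := t) (hF _)) fun t ht => by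
      have hinc : ⟪gradient F (x + t • (y - x)) - gradient F x, y - x⟫ ≤ L * t * ‖y - x‖ ^ 2 :=
        calc _ ≤ ‖gradient F (x + t • (y - x)) - gradient F x‖ * ‖y - x‖ := real_inner_le_norm _ _
          _ ≤ L * ‖x + t • (y - x) - x‖ * ‖y - x‖ := by gcongr; exact hsmooth _ _
          _ = L * t * ‖y - x‖ ^ 2 := by
            rw [add_sub_cancel_left, norm_smul, Real.norm_of_nonneg ht.1]; ring
      simp only [zero_smul, add_zero, inner_sub_left] at hinc ⊢
      linarith
  simp only [one_smul, zero_smul, add_zero, add_sub_cancel] at hline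
  linarith

theorem gradient_eq_zero_of_forall_le {xmin : E} (hmin : ∀ x, F xmin ≤ F x) :
    gradient F xmin = 0 := by
  have : IsLocalMin F xmin := Filter.Eventually.of_forall hmin
  simp [gradient, this.fderiv_eq_zero]

/-- Convexity at `x` evaluated at `xmin + L⁻¹ • ∇F x`, where the descent lemma bounds `F`. -/
theorem sub_add_sq_gradient_le_inner_gradient {L : ℝ} (hF : Differentiable ℝ F)
    (hsmooth : ∀ x y, ‖gradient F x - gradient F y‖ ≤ L * ‖x - y‖)
    (hconv : ∀ x y, F x + ⟪gradient F x, y - x⟫ ≤ F y) {xmin : E} (hmin : ∀ x, F xmin ≤ F x)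
    (x : E) :
    F x - F xmin + (2 * L)⁻¹ * ‖gradient F x‖ ^ 2 ≤ ⟪gradient F x, x - xmin⟫ := by
  set G := gradient F x
  set u := xmin + L⁻¹ • G
  have hdescent : F u ≤ F xmin + (2 * L)⁻¹ * ‖G‖ ^ 2 := by
    have := le_add_inner_gradient_add_sq_of_lipschitz hF hsmooth xmin u
    rw [gradient_eq_zero_of_forall_le hmin, inner_zero_left, add_sub_cancel_left, norm_smul,
      Real.norm_eq_abs, mul_pow, sq_abs, add_zero] at this
    have hL : L⁻¹ * L * L⁻¹ = L⁻¹ := by simpa using mul_inv_mul_cancel L⁻¹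
    linear_combination this + ‖G‖ ^ 2 / 2 * hL
  have hu : ⟪G, u - x⟫ = L⁻¹ * ‖G‖ ^ 2 - ⟪G, x - xmin⟫ := by
    rw [show u - x = L⁻¹ • G - (x - xmin) by simp only [u]; abel, inner_sub_right,
      real_inner_smul_right, real_inner_self_eq_norm_sq]
  have := hconv x u
  rw [hu] at this
  linear_combination this + hdescent

theorem norm_sub_min_sq_le {μ : ℝ} (hμ : 0 < μ)
    (hsc : ∀ x y, F y ≥ F x + ⟪gradient F x, y - x⟫ + μ / 2 * ‖y - x‖ ^ 2) {xmin : E}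
    (hmin : ∀ x, F xmin ≤ F x) (y : E) :
    ‖y - xmin‖ ^ 2 ≤ 2 / μ * (F y - F xmin) := by
  have := hsc xmin y
  rw [gradient_eq_zero_of_forall_le hmin, inner_zero_left] at this
  rw [div_mul_eq_mul_div, le_div_iff₀ hμ]
  linarith

theorem norm_sub_smul_gradient_sub_sq_le {L μ γ : ℝ} (hμ : 0 < μ) (hγ : 0 ≤ γ)
    (hF : Differentiable ℝ F) (hsmooth : ∀ x y, ‖gradient F x - gradient F y‖ ≤ L * ‖x - y‖)
    (hsc : ∀ x y, F y ≥ F x + ⟪gradient F x, y - x⟫ + μ / 2 * ‖y - x‖ ^ 2) {xmin : E}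
    (hmin : ∀ x, F xmin ≤ F x) (x y : E) :
    ‖x - γ • gradient F x - y‖ ^ 2 ≤ ‖x - y‖ ^ 2 + (2 * γ ^ 2 - γ / L) * ‖gradient F x‖ ^ 2
      + 2 / μ * (F y - F xmin) + 2 * γ * (F xmin - F x) := by
  set G := gradient F x
  have hconv : ∀ x y, F x + ⟪gradient F x, y - x⟫ ≤ F y := fun x y => by
    nlinarith [hsc x y, sq_nonneg ‖y - x‖]
  have hexpand : ‖x - γ • G - y‖ ^ 2
      = ‖x - y‖ ^ 2 - 2 * γ * (⟪G, x - xmin⟫ - ⟪G, y - xmin⟫) + γ ^ 2 * ‖G‖ ^ 2 := by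
    rw [show x - γ • G - y = (x - y) - γ • G by abel, norm_sub_sq_real, ← inner_sub_right,
      sub_sub_sub_cancel_right, real_inner_smul_right, real_inner_comm, norm_smul,
      Real.norm_eq_abs, mul_pow, sq_abs]
    ring
  have hyoung : 2 * γ * ⟪G, y - xmin⟫ ≤ γ ^ 2 * ‖G‖ ^ 2 + ‖y - xmin‖ ^ 2 := by
    nlinarith [real_inner_le_norm G (y - xmin), sq_nonneg (γ * ‖G‖ - ‖y - xmin‖)]
  have hinner := mul_le_mul_of_nonneg_left
    (sub_add_sq_gradient_le_inner_gradient hF hsmooth hconv hmin x) (by positivity : 0 ≤ 2 * γ)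
  have := norm_sub_min_sq_le hμ hsc hmin y
  rw [hexpand]
  linear_combination hinner + hyoung + this

end Smooth

theorem integral_smul_sub_eq_zero_of_integral_eq {Ω E : Type*} [MeasurableSpace Ω]
    {P : Measure Ω} [IsProbabilityMeasure P] [NormedAddCommGroup E] [NormedSpace ℝ E]
    [CompleteSpace E] {U : Ω → E} {m : E} (hU : Integrable U P) (hm : ∫ ω, U ω ∂P = m) (a : ℝ) :
    ∫ ω, a • (m - U ω) ∂P = 0 := by
  rw [integral_smul, integral_sub (integrable_const m) hU, integral_const, hm]
  simp

section L2

variable {Ω E : Type*} [MeasurableSpace Ω] {P : Measure Ω} [NormedAddCommGroup E]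
  [InnerProductSpace ℝ E] {U V : Ω → E}

theorem MeasureTheory.MemLp.integrable_inner (hU : MemLp U 2 P) (hV : MemLp V 2 P) :
    Integrable (fun ω => ⟪U ω, V ω⟫) P := by
  refine (L2.integrable_inner (𝕜 := ℝ) (hU.toLp U) (hV.toLp V)).congr ?_
  filter_upwards [hU.coeFn_toLp, hV.coeFn_toLp] with ω hUω hVω
  rw [hUω, hVω]

theorem integral_norm_add_sq (hU : MemLp U 2 P) (hV : MemLp V 2 P) :
    ∫ ω, ‖U ω + V ω‖ ^ 2 ∂P
      = ∫ ω, ‖U ω‖ ^ 2 ∂P + 2 * ∫ ω, ⟪U ω, V ω⟫ ∂P + ∫ ω, ‖V ω‖ ^ 2 ∂P := by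
  have hU2 : Integrable (fun ω => ‖U ω‖ ^ 2) P := hU.integrable_norm_pow two_ne_zero
  have hV2 : Integrable (fun ω => ‖V ω‖ ^ 2) P := hV.integrable_norm_pow two_ne_zero
  have hUV := (hU.integrable_inner hV).const_mul 2
  simp_rw [norm_add_sq_real]
  rw [integral_add (f := fun ω => ‖U ω‖ ^ 2 + 2 * ⟪U ω, V ω⟫) (hU2.add hUV) hV2,
    integral_add hU2 hUV, integral_const_mul]

variable [CompleteSpace E] [IsProbabilityMeasure P]

theorem integral_norm_const_add_sq (c : E) (hU : MemLp U 2 P) (hU0 : ∫ ω, U ω ∂P = 0) :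
    ∫ ω, ‖c + U ω‖ ^ 2 ∂P = ‖c‖ ^ 2 + ∫ ω, ‖U ω‖ ^ 2 ∂P := by
  rw [integral_norm_add_sq (memLp_const c) hU, integral_inner (hU.integrable one_le_two) c, hU0]
  simp

theorem integral_norm_const_add_add_sq (c : E) (hU : MemLp U 2 P) (hV : MemLp V 2 P)
    (hU0 : ∫ ω, U ω ∂P = 0) (hV0 : ∫ ω, V ω ∂P = 0) (hUV : ∫ ω, ⟪U ω, V ω⟫ ∂P = 0) :
    ∫ ω, ‖c + (U ω + V ω)‖ ^ 2 ∂P = ‖c‖ ^ 2 + ∫ ω, ‖U ω‖ ^ 2 ∂P + ∫ ω, ‖V ω‖ ^ 2 ∂P := by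
  rw [integral_norm_const_add_sq (U := fun ω => U ω + V ω) c (hU.add hV),
    integral_norm_add_sq hU hV, hUV]
  · ring
  · rw [integral_add (hU.integrable one_le_two) (hV.integrable one_le_two), hU0, hV0, add_zero]

end L2

theorem fedegg_one_step_intermediate_bound_general
    {E : Type*} [NormedAddCommGroup E] [InnerProductSpace ℝ E] [CompleteSpace E]
    (F : E → ℝ) (L μ : ℝ) (hμ : 0 < μ)
    (hdiff : Differentiable ℝ F)
    (hsmooth : ∀ x y : E, ‖gradient F x - gradient F y‖ ≤ L * ‖x - y‖)
    (hsc : ∀ x y : E, F y ≥ F x + ⟪gradient F x, y - x⟫ + μ / 2 * ‖y - x‖ ^ 2)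
    (Wg : E) (hWg : ∀ x : E, F Wg ≤ F x) (Fstar : ℝ) (hFstar : Fstar = F Wg)
    {Ω : Type*} [MeasurableSpace Ω] (P : Measure Ω) [IsProbabilityMeasure P]
    (W Wstar : E) (η : ℝ)
    (g q : Ω → E) (hg : MemLp g 2 P) (hq : MemLp q 2 P)
    (gbar : E) (hgbar : ∫ ω, g ω ∂P = gbar)
    (Wbar : E) (hWbar : Wbar = W - η • gbar)
    (hqbar : ∫ ω, q ω ∂P = gradient F Wbar)
    (σg : ℝ) (hvar : ∫ ω, ‖q ω - gradient F Wbar‖ ^ 2 ∂P ≤ σg ^ 2)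
    (hcross : ∫ ω, ⟪gbar - g ω, gradient F Wbar - q ω⟫ ∂P = 0) :
    ∀ γ : ℝ, 0 ≤ γ →
      ∫ ω, ‖W - η • g ω - γ • q ω - Wstar‖ ^ 2 ∂P ≤
        (∫ ω, ‖W - η • g ω - Wstar‖ ^ 2 ∂P)
          + γ ^ 2 * σg ^ 2
          + (2 * γ ^ 2 - γ / L) * ‖gradient F Wbar‖ ^ 2
          + 2 / μ * (F Wstar - Fstar)
          + 2 * γ * (Fstar - F Wbar) := by
  intro γ hγ
  set G := gradient F Wbar
  have hU : MemLp (fun ω => η • (gbar - g ω)) 2 P := ((memLp_const gbar).sub hg).const_smul η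
  have hV : MemLp (fun ω => γ • (G - q ω)) 2 P := ((memLp_const G).sub hq).const_smul γ
  have hU0 := integral_smul_sub_eq_zero_of_integral_eq (hg.integrable one_le_two) hgbar η
  have hV0 := integral_smul_sub_eq_zero_of_integral_eq (hq.integrable one_le_two) hqbar γ
  have hUV : ∫ ω, ⟪η • (gbar - g ω), γ • (G - q ω)⟫ ∂P = 0 := by
    simp_rw [real_inner_smul_left, real_inner_smul_right]
    rw [integral_const_mul, integral_const_mul, hcross, mul_zero, mul_zero]
  have hV2 : ∫ ω, ‖γ • (G - q ω)‖ ^ 2 ∂P = γ ^ 2 * ∫ ω, ‖q ω - G‖ ^ 2 ∂P := by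
    simp_rw [norm_smul, mul_pow, Real.norm_eq_abs, sq_abs, norm_sub_rev G]
    exact integral_const_mul _ _
  have hfedavg : ∫ ω, ‖W - η • g ω - Wstar‖ ^ 2 ∂P
      = ‖Wbar - Wstar‖ ^ 2 + ∫ ω, ‖η • (gbar - g ω)‖ ^ 2 ∂P := by
    rw [← integral_norm_const_add_sq _ hU hU0, hWbar]
    congr 1 with ω
    congr 2
    module
  have hfedegg : ∫ ω, ‖W - η • g ω - γ • q ω - Wstar‖ ^ 2 ∂P
      = ‖Wbar - γ • G - Wstar‖ ^ 2 + ∫ ω, ‖η • (gbar - g ω)‖ ^ 2 ∂P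
        + γ ^ 2 * ∫ ω, ‖q ω - G‖ ^ 2 ∂P := by
    rw [← hV2, ← integral_norm_const_add_add_sq _ hU hV hU0 hV0 hUV, hWbar]
    congr 1 with ω
    congr 2
    module
  have hstep := norm_sub_smul_gradient_sub_sq_le hμ hγ hdiff hsmooth hsc hWg Wbar Wstar
  have hnoise := mul_le_mul_of_nonneg_left hvar (sq_nonneg γ)
  rw [hfedegg, hfedavg, hFstar]
  linarith

/-- Intermediate one-step comparison between the FedEGG update W − ηg − γq and
the FedAvg update W − ηg, from the proof of Theorem 1, before substituting the
heterogeneity and guiding-strength terms. -/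
theorem fedegg_one_step_intermediate_bound
    {E : Type*} [NormedAddCommGroup E] [InnerProductSpace ℝ E] [CompleteSpace E]
    (F : E → ℝ) (L μ : ℝ) (hL : 0 < L) (hμ : 0 < μ)
    (hdiff : Differentiable ℝ F)
    (hsmooth : ∀ x y : E, ‖gradient F x - gradient F y‖ ≤ L * ‖x - y‖)
    (hsc : ∀ x y : E, F y ≥ F x + ⟪gradient F x, y - x⟫ + μ / 2 * ‖y - x‖ ^ 2)
    (Wg : E) (hWg : ∀ x : E, F Wg ≤ F x) (Fstar : ℝ) (hFstar : Fstar = F Wg)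
    {Ω : Type*} [MeasurableSpace Ω] (P : Measure Ω) [IsProbabilityMeasure P]
    (W Wstar : E) (η : ℝ) (hη : 0 ≤ η)
    (g q : Ω → E) (hg : MemLp g 2 P) (hq : MemLp q 2 P)
    (gbar : E) (hgbar : ∫ ω, g ω ∂P = gbar)
    (Wbar : E) (hWbar : Wbar = W - η • gbar)
    (hqbar : ∫ ω, q ω ∂P = gradient F Wbar)
    (σg : ℝ) (hvar : ∫ ω, ‖q ω - gradient F Wbar‖ ^ 2 ∂P ≤ σg ^ 2)
    (hcross : ∫ ω, ⟪gbar - g ω, gradient F Wbar - q ω⟫ ∂P = 0) :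
    ∀ γ : ℝ, 0 ≤ γ →
      ∫ ω, ‖W - η • g ω - γ • q ω - Wstar‖ ^ 2 ∂P ≤
        (∫ ω, ‖W - η • g ω - Wstar‖ ^ 2 ∂P)
          + γ ^ 2 * σg ^ 2
          + (2 * γ ^ 2 - γ / L) * ‖gradient F Wbar‖ ^ 2
          + 2 / μ * (F Wstar - Fstar)
          + 2 * γ * (Fstar - F Wbar) :=
  fedegg_one_step_intermediate_bound_general F L μ hμ hdiff hsmooth hsc Wg hWg Fstar hFstar P W
    Wstar η g q hg hq gbar hgbar Wbar hWbar hqbar σg hvar hcross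
end

section
/- Let E be a real Hilbert space and let F : E → ℝ be differentiable, L-smooth with L > 0, and μ-strongly convex with μ > 0, with global minimizer W_g* ∈ E and optimal value F* = F(W_g*). Then for all W̄, W* ∈ E and every γ ≥ 0: ‖W̄ − γ ∇F(W̄) − W*‖² ≤ ‖W̄ − W*‖² + (2γ² − γ/L)‖∇F(W̄)‖² + (2/μ)(F(W*) − F*) + 2γ(F* − F(W̄)). -/
/-!
The descent lemma for an `L`-smooth `F` gives `F (W_g* + ∇F(W̄)/L) ≤ F* + ‖∇F(W̄)‖²/(2L)`, since
`∇F` vanishes at the minimizer, while convexity at `W̄` bounds the same value from below; together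
`⟪∇F(W̄), W̄ - W_g*⟫ ≥ F(W̄) - F* + ‖∇F(W̄)‖²/(2L)`. Expanding the square and splitting
`W̄ - W*` through `W_g*`, the remaining cross term `⟪∇F(W̄), W_g* - W*⟫` is absorbed by Young's
inequality into `γ²‖∇F(W̄)‖² + ‖W_g* - W*‖²`, and strong convexity at `W_g*` bounds
`‖W_g* - W*‖²` by `(2/μ)(F(W*) - F*)`.
-/

open scoped RealInnerProductSpace
open InnerProductSpace Set

theorem le_add_fderiv_add_of_lipschitz_fderiv {E : Type*} [NormedAddCommGroup E]
    [NormedSpace ℝ E] {f : E → ℝ} {f' : E → StrongDual ℝ E} {L : ℝ}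
    (hf : ∀ x, HasFDerivAt f (f' x) x) (hf' : ∀ x y, ‖f' x - f' y‖ ≤ L * ‖x - y‖) (x y : E) :
    f y ≤ f x + f' x (y - x) + L / 2 * ‖y - x‖ ^ 2 := by
  obtain ⟨v, rfl⟩ : ∃ v, y = x + v := ⟨y - x, (add_sub_cancel x y).symm⟩
  rw [add_sub_cancel_left]
  let φ : ℝ → ℝ := fun t => f (x + t • v) - t * f' x v - L / 2 * t ^ 2 * ‖v‖ ^ 2
  let φ' : ℝ → ℝ := fun t => (f' (x + t • v) - f' x) v - L * t * ‖v‖ ^ 2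
  have hφ : ∀ t, HasDerivAt φ (φ' t) t := by
    intro t
    have hline : HasDerivAt (fun t : ℝ => x + t • v) v t := by
      simpa using ((hasDerivAt_id t).smul_const v).const_add x
    refine ((((hf _).comp_hasDerivAt t hline).sub ((hasDerivAt_id t).mul_const (f' x v))).sub
      (((hasDerivAt_pow 2 t).const_mul (L / 2)).mul_const (‖v‖ ^ 2))).congr_deriv ?_
    simp only [φ', sub_apply]
    ring
  have hφ'_nonpos : ∀ t ∈ interior (Ici (0 : ℝ)), φ' t ≤ 0 := by
    intro t ht
    rw [interior_Ici] at ht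
    refine sub_nonpos.2 ?_
    calc (f' (x + t • v) - f' x) v ≤ ‖f' (x + t • v) - f' x‖ * ‖v‖ :=
          (le_abs_self _).trans ((f' (x + t • v) - f' x).le_opNorm v)
      _ ≤ L * ‖(x + t • v) - x‖ * ‖v‖ := by gcongr; exact hf' _ _
      _ = L * t * ‖v‖ ^ 2 := by
        rw [add_sub_cancel_left, norm_smul, Real.norm_of_nonneg (le_of_lt ht)]; ring
  have hanti : AntitoneOn φ (Ici 0) :=
    antitoneOn_of_hasDerivWithinAt_nonpos (convex_Ici 0)
      (fun t _ => (hφ t).continuousAt.continuousWithinAt)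
      (fun t _ => (hφ t).hasDerivWithinAt) hφ'_nonpos
  have h01 := hanti self_mem_Ici (mem_Ici.2 zero_le_one) zero_le_one
  simp only [φ, one_smul, zero_smul, add_zero] at h01
  linarith

section InnerProductSpace

variable {E : Type*} [NormedAddCommGroup E] [InnerProductSpace ℝ E]

theorem norm_sub_smul_sub_sq_add_norm_smul_add_sub_sq (x y a g : E) (γ : ℝ) :
    ‖x - γ • g - y‖ ^ 2 + ‖γ • g + (a - y)‖ ^ 2 =
      ‖x - y‖ ^ 2 - 2 * γ * ⟪g, x - a⟫ + 2 * γ ^ 2 * ‖g‖ ^ 2 + ‖a - y‖ ^ 2 := by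
  simp only [← real_inner_self_eq_norm_sq, inner_sub_left, inner_sub_right, inner_add_left,
    inner_add_right, real_inner_smul_left, real_inner_smul_right]
  rw [real_inner_comm x g, real_inner_comm y g, real_inner_comm a g, real_inner_comm x y,
    real_inner_comm a y]
  ring

variable [CompleteSpace E]

theorem le_add_inner_gradient_add_of_lipschitz_gradient {F : E → ℝ} {L : ℝ}
    (hF : Differentiable ℝ F) (hF' : ∀ x y, ‖gradient F x - gradient F y‖ ≤ L * ‖x - y‖) (x y : E) :
    F y ≤ F x + ⟪gradient F x, y - x⟫ + L / 2 * ‖y - x‖ ^ 2 := by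
  have hlip : ∀ x y, ‖toDual ℝ E (gradient F x) - toDual ℝ E (gradient F y)‖ ≤ L * ‖x - y‖ := by
    intro x y
    rw [← map_sub, LinearIsometryEquiv.norm_map]
    exact hF' x y
  simpa only [toDual_apply_apply] using
    le_add_fderiv_add_of_lipschitz_fderiv (fun x => (hF x).hasGradientAt.hasFDerivAt) hlip x y

theorem IsLocalMin.gradient_eq_zero {F : E → ℝ} {a : E} (h : IsLocalMin F a) :
    gradient F a = 0 := by
  rw [gradient, h.fderiv_eq_zero, map_zero]

theorem sub_add_sq_norm_gradient_div_le_inner_gradient {F : E → ℝ} {L : ℝ} (hL : 0 < L)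
    (hF : Differentiable ℝ F) (hF' : ∀ x y, ‖gradient F x - gradient F y‖ ≤ L * ‖x - y‖)
    (hconv : ∀ x y, F x + ⟪gradient F x, y - x⟫ ≤ F y) {a : E} (ha : gradient F a = 0) (x : E) :
    F x - F a + ‖gradient F x‖ ^ 2 / (2 * L) ≤ ⟪gradient F x, x - a⟫ := by
  set g := gradient F x
  set z := a + L⁻¹ • g
  have hup : F z ≤ F a + ‖g‖ ^ 2 / (2 * L) := by
    have := le_add_inner_gradient_add_of_lipschitz_gradient hF hF' a z
    rw [ha, inner_zero_left, add_zero, add_sub_cancel_left, norm_smul, mul_pow, norm_inv,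
      Real.norm_of_nonneg hL.le] at this
    convert this using 2
    field_simp
  have hlow : F x - ⟪g, x - a⟫ + ‖g‖ ^ 2 / L ≤ F z := by
    have := hconv x z
    have hinner : ⟪g, z - x⟫ = -⟪g, x - a⟫ + ‖g‖ ^ 2 / L := by
      rw [show z - x = -(x - a) + L⁻¹ • g by simp only [z]; abel, inner_add_right, inner_neg_right,
        real_inner_smul_right, real_inner_self_eq_norm_sq, inv_mul_eq_div]
    linarith
  have : ‖g‖ ^ 2 / L = ‖g‖ ^ 2 / (2 * L) + ‖g‖ ^ 2 / (2 * L) := by field_simp; ring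
  linarith

end InnerProductSpace

/-- Deterministic one-step guiding-task descent bound underlying Theorem 1:
one exact gradient step of the guiding task F from the aggregated model W̄
changes the squared distance to the FL optimum W* by at most the stated amount. -/
theorem guiding_one_step_descent_bound
    {E : Type*} [NormedAddCommGroup E] [InnerProductSpace ℝ E] [CompleteSpace E]
    (F : E → ℝ) (L μ : ℝ) (hL : 0 < L) (hμ : 0 < μ)
    (hdiff : Differentiable ℝ F)
    (hsmooth : ∀ x y : E, ‖gradient F x - gradient F y‖ ≤ L * ‖x - y‖)
    (hsc : ∀ x y : E, F y ≥ F x + ⟪gradient F x, y - x⟫ + μ / 2 * ‖y - x‖ ^ 2)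
    (Wg : E) (hWg : ∀ x : E, F Wg ≤ F x) (Fstar : ℝ) (hFstar : Fstar = F Wg) :
    ∀ (Wbar Wstar : E) (γ : ℝ), 0 ≤ γ →
      ‖Wbar - γ • gradient F Wbar - Wstar‖ ^ 2 ≤
        ‖Wbar - Wstar‖ ^ 2 + (2 * γ ^ 2 - γ / L) * ‖gradient F Wbar‖ ^ 2
          + 2 / μ * (F Wstar - Fstar) + 2 * γ * (Fstar - F Wbar) := by
  intro Wbar Wstar γ hγ
  subst hFstar
  have hgrad : gradient F Wg = 0 := IsLocalMin.gradient_eq_zero (Filter.Eventually.of_forall hWg)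
  have hconv : ∀ x y, F x + ⟪gradient F x, y - x⟫ ≤ F y := fun x y => by
    linarith [hsc x y, (by positivity : 0 ≤ μ / 2 * ‖y - x‖ ^ 2)]
  have hdist : ‖Wg - Wstar‖ ^ 2 ≤ 2 / μ * (F Wstar - F Wg) := by
    have := hsc Wg Wstar
    rw [hgrad, inner_zero_left, add_zero, norm_sub_rev] at this
    rw [div_mul_eq_mul_div, le_div_iff₀ hμ]
    linarith
  have hkey := sub_add_sq_norm_gradient_div_le_inner_gradient hL hdiff hsmooth hconv hgrad Wbar
  have hγL : γ / L * ‖gradient F Wbar‖ ^ 2 = 2 * γ * (‖gradient F Wbar‖ ^ 2 / (2 * L)) := by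
    field_simp
  calc ‖Wbar - γ • gradient F Wbar - Wstar‖ ^ 2
      ≤ ‖Wbar - Wstar‖ ^ 2 - 2 * γ * ⟪gradient F Wbar, Wbar - Wg⟫
          + 2 * γ ^ 2 * ‖gradient F Wbar‖ ^ 2 + ‖Wg - Wstar‖ ^ 2 := by
        linarith [norm_sub_smul_sub_sq_add_norm_smul_add_sub_sq Wbar Wstar Wg (gradient F Wbar) γ,
          sq_nonneg ‖γ • gradient F Wbar + (Wg - Wstar)‖]
    _ ≤ _ := by linarith [mul_le_mul_of_nonneg_left hkey hγ]
end
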